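/- arXiv:2307.14101 — 4 statements merged into one kernel-verified Lean document; each statement's English description precedes it below -/
import Mathlib

section
/- If f is L-smooth (‖∇f(y) − ∇f(x)‖ ≤ L‖y−x‖) and ‖∇̃f(x) − ∇f(x)‖ ≤ α‖∇f(x)‖ with α ∈ [0,1), then for all x, y: f(y) ≤ f(x) + ⟨∇̃f(x), y−x⟩ + (L/2)‖y−x‖² + (α/(1−α))‖∇̃f(x)‖·‖y−x‖. -/
/-!
Along the segment `t ↦ x + t • (y - x)` the slope of `f` exceeds `⟪∇f x, y - x⟫` by at most
`L t ‖y - x‖²`, so `f` stays below the quadratic model with that slope on `[0, 1]` (the descent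
lemma). Replacing `∇f x` by `∇̃f x` costs `⟪∇f x - ∇̃f x, y - x⟫ ≤ α ‖∇f x‖ ‖y - x‖`, and the
triangle inequality gives `(1 - α) ‖∇f x‖ ≤ ‖∇̃f x‖`.
-/

open scoped RealInnerProductSpace

theorem one_sub_mul_norm_le_of_norm_sub_le {F : Type*} [SeminormedAddCommGroup F] {a b : F}
    {α : ℝ} (h : ‖a - b‖ ≤ α * ‖b‖) : (1 - α) * ‖b‖ ≤ ‖a‖ := by
  linarith [norm_le_norm_add_norm_sub' b a, norm_sub_rev a b]

section

variable {E : Type*} [NormedAddCommGroup E] [InnerProductSpace ℝ E]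

theorem HasGradientAt.hasDerivAt_comp_add_smul [CompleteSpace E] {f : E → ℝ} {g x v : E}
    {t : ℝ} (hf : HasGradientAt f g (x + t • v)) :
    HasDerivAt (fun s : ℝ => f (x + s • v)) ⟪g, v⟫ t := by
  have hline : HasDerivAt (fun s : ℝ => x + s • v) v t := by
    simpa using ((hasDerivAt_id t).smul_const v).const_add x
  have := hf.hasFDerivAt.comp_hasDerivAt t hline
  simp only [InnerProductSpace.toDual_apply_apply, Function.comp_def] at this
  exact this

theorem le_add_inner_add_half_mul_sq_of_hasGradientAt [CompleteSpace E] {f : E → ℝ}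
    {g : E → E} {L : ℝ} (hg : ∀ z, HasGradientAt f (g z) z) {x : E}
    (hLip : ∀ z, ‖g z - g x‖ ≤ L * ‖z - x‖) (y : E) :
    f y ≤ f x + ⟪g x, y - x⟫ + L / 2 * ‖y - x‖ ^ 2 := by
  set v := y - x
  have hf (t : ℝ) : HasDerivAt (fun s : ℝ => f (x + s • v)) ⟪g (x + t • v), v⟫ t :=
    (hg _).hasDerivAt_comp_add_smul
  have hB (t : ℝ) : HasDerivAt (fun s : ℝ => f x + s * ⟪g x, v⟫ + L / 2 * s ^ 2 * ‖v‖ ^ 2)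
      (⟪g x, v⟫ + L * t * ‖v‖ ^ 2) t := by
    refine ((((hasDerivAt_id' t).mul_const ⟪g x, v⟫).const_add (f x)).add
      (((hasDerivAt_pow 2 t).const_mul (L / 2)).mul_const (‖v‖ ^ 2))).congr_deriv ?_
    push_cast; ring
  have hslope : ∀ t ∈ Set.Ico (0 : ℝ) 1, ⟪g (x + t • v), v⟫ ≤ ⟪g x, v⟫ + L * t * ‖v‖ ^ 2 := by
    rintro t ⟨ht, -⟩
    have hgap : ‖g (x + t • v) - g x‖ ≤ L * t * ‖v‖ := by
      simpa [norm_smul, abs_of_nonneg ht, mul_assoc] using hLip (x + t • v)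
    calc ⟪g (x + t • v), v⟫ = ⟪g x, v⟫ + ⟪g (x + t • v) - g x, v⟫ := by
          rw [inner_sub_left]; ring
      _ ≤ ⟪g x, v⟫ + ‖g (x + t • v) - g x‖ * ‖v‖ := by gcongr; exact real_inner_le_norm _ _
      _ ≤ ⟪g x, v⟫ + L * t * ‖v‖ ^ 2 := by rw [sq, ← mul_assoc]; gcongr
  have hfence := image_le_of_deriv_right_le_deriv_boundary
    (fun t _ => (hf t).continuousAt.continuousWithinAt) (fun t _ => (hf t).hasDerivWithinAt)
    (by simp) (fun t _ => (hB t).continuousAt.continuousWithinAt)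
    (fun t _ => (hB t).hasDerivWithinAt) hslope (Set.right_mem_Icc.2 zero_le_one)
  simpa [v] using hfence

theorem inner_sub_le_of_norm_sub_le {a b v : E} {α : ℝ} (hα0 : 0 ≤ α) (hα1 : α < 1)
    (h : ‖a - b‖ ≤ α * ‖b‖) : ⟪b - a, v⟫ ≤ α / (1 - α) * ‖a‖ * ‖v‖ := by
  have hb : α * ‖b‖ ≤ α / (1 - α) * ‖a‖ :=
    calc α * ‖b‖ = α / (1 - α) * ((1 - α) * ‖b‖) := by
          field_simp [(sub_pos.2 hα1).ne']
      _ ≤ α / (1 - α) * ‖a‖ := mul_le_mul_of_nonneg_left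
          (one_sub_mul_norm_le_of_norm_sub_le h) (div_nonneg hα0 (sub_pos.2 hα1).le)
  calc ⟪b - a, v⟫ ≤ ‖b - a‖ * ‖v‖ := real_inner_le_norm _ _
    _ ≤ α / (1 - α) * ‖a‖ * ‖v‖ := by rw [norm_sub_rev]; gcongr; exact h.trans hb

end

theorem stmt2_general {n : ℕ} (f : EuclideanSpace ℝ (Fin n) → ℝ)
    (hf : Differentiable ℝ f)
    (L : ℝ)
    (hsmooth : ∀ x y, ‖gradient f y - gradient f x‖ ≤ L * ‖y - x‖)
    (α : ℝ) (hα0 : 0 ≤ α) (hα1 : α < 1)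
    (tg : EuclideanSpace ℝ (Fin n) → EuclideanSpace ℝ (Fin n))
    (herr : ∀ x, ‖tg x - gradient f x‖ ≤ α * ‖gradient f x‖) :
    ∀ x y, f y ≤ f x + ⟪tg x, y - x⟫ + (L / 2) * ‖y - x‖ ^ 2
      + (α / (1 - α)) * ‖tg x‖ * ‖y - x‖ := by
  intro x y
  have hdescent := le_add_inner_add_half_mul_sq_of_hasGradientAt
    (fun z => (hf z).hasGradientAt) (hsmooth x) y
  have herr_inner := inner_sub_le_of_norm_sub_le (v := y - x) hα0 hα1 (herr x)
  rw [inner_sub_left] at herr_inner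
  linarith

/-- Descent-type inequality with inexact gradient for L-smooth f. -/
theorem stmt2 {n : ℕ} (f : EuclideanSpace ℝ (Fin n) → ℝ)
    (hf : Differentiable ℝ f)
    (L : ℝ) (hL : 0 < L)
    (hsmooth : ∀ x y, ‖gradient f y - gradient f x‖ ≤ L * ‖y - x‖)
    (α : ℝ) (hα0 : 0 ≤ α) (hα1 : α < 1)
    (tg : EuclideanSpace ℝ (Fin n) → EuclideanSpace ℝ (Fin n))
    (herr : ∀ x, ‖tg x - gradient f x‖ ≤ α * ‖gradient f x‖) :
    ∀ x y, f y ≤ f x + ⟪tg x, y - x⟫ + (L / 2) * ‖y - x‖ ^ 2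
      + (α / (1 - α)) * ‖tg x‖ * ‖y - x‖ :=
  stmt2_general f hf L hsmooth α hα0 hα1 tg herr
end

section
/- Define sequences with L_0 ≤ L, β_0 ≥ β := 0.5 − α > 0, where at each iteration L is at most doubled from max{L_k/2, L_min} and β is at most halved from min{2β_k, β_max}, with updates terminating once L_{k+1} ≥ L and β_{k+1} ≤ β. Then for all k < N: L_{k+1} ≤ 2L·max{1, β_max/(0.5β)} and β_{k+1} ≥ β / max{2, 2L/L_min}. -/
/-!
The doubling of `L` and the halving of `β` within one iteration cancel, so the product
`L_{k+1} β_{k+1}` equals the product `max (L_k / 2) L_min * min (2 β_k) β_max` of the trial values.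
This product stays between `L_min β` and `2 L β_max`. An iteration ends either at once (then
the trial values are in range by induction), or because `L_{k+1} < 2 L` (then the lower bound
on the product bounds `β_{k+1}` from below), or because `β_{k+1} > β / 2` (then the upper bound
on the product bounds `L_{k+1}` from above).
-/

section AdaptiveStep

variable (Lmin L b bm : ℝ)

/-- One iteration of Algorithm 2: `(x, y, x', y') = (L_k, β_k, L_{k+1}, β_{k+1})`, `b = β`,
`bm = β_max`, and `m` counts the doublings. -/
def AdaptiveStep (x y x' y' : ℝ) : Prop :=
  ∃ m : ℕ, x' = 2 ^ m * max (x / 2) Lmin ∧ y' = min (2 * y) bm / 2 ^ m ∧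
    (m = 0 ∨ x' / 2 < L ∨ b < 2 * y')

structure AdaptiveInvariant (x y : ℝ) : Prop where
  pos : 0 < y
  le_max : y ≤ bm
  mul_le : x * y ≤ 2 * L * bm
  le_trial_mul : Lmin * b ≤ max (x / 2) Lmin * min (2 * y) bm
  le_bound : x ≤ 2 * L * max 1 (bm / (1 / 2 * b))
  bound_le : b / max 2 (2 * L / Lmin) ≤ y

variable {Lmin L b bm}

lemma trial_mul_le {x y : ℝ} (hLmin : 0 ≤ Lmin) (hL : Lmin ≤ L) (hbm : 0 ≤ bm)
    (hxy : x * y ≤ 2 * L * bm) : max (x / 2) Lmin * min (2 * y) bm ≤ 2 * L * bm := by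
  rcases le_total (x / 2) Lmin with hx | hx
  · rw [max_eq_right hx]
    calc Lmin * min (2 * y) bm ≤ Lmin * bm := mul_le_mul_of_nonneg_left (min_le_right _ _) hLmin
      _ ≤ 2 * L * bm := mul_le_mul_of_nonneg_right (by linarith) hbm
  · rw [max_eq_left hx]
    calc x / 2 * min (2 * y) bm ≤ x / 2 * (2 * y) :=
          mul_le_mul_of_nonneg_left (min_le_left _ _) (hLmin.trans hx)
      _ = x * y := by ring
      _ ≤ 2 * L * bm := hxy

lemma le_trial_mul_of_le {x y : ℝ} (hLmin : 0 ≤ Lmin) (hb : 0 ≤ b) (hbm : b ≤ bm)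
    (hy : b ≤ y) : Lmin * b ≤ max (x / 2) Lmin * min (2 * y) bm :=
  mul_le_mul (le_max_right _ _) (le_min (by linarith) hbm) hb (hLmin.trans (le_max_right _ _))

lemma le_trial_mul_of_le_mul {x y : ℝ} (hLmin : 0 ≤ Lmin) (hb : 0 ≤ b) (hbm : b ≤ bm)
    (hy : 0 ≤ y) (hxy : Lmin * b ≤ x * y) : Lmin * b ≤ max (x / 2) Lmin * min (2 * y) bm := by
  rcases le_total (2 * y) bm with h | h
  · rw [min_eq_left h]
    calc Lmin * b ≤ x * y := hxy
      _ = x / 2 * (2 * y) := by ring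
      _ ≤ max (x / 2) Lmin * (2 * y) := by gcongr; exact le_max_left _ _
  · rw [min_eq_right h]
    exact mul_le_mul (le_max_right _ _) hbm hb (hLmin.trans (le_max_right _ _))

lemma two_mul_le_bound (hL : 0 ≤ L) : 2 * L ≤ 2 * L * max 1 (bm / (1 / 2 * b)) :=
  le_mul_of_one_le_right (by positivity) (le_max_left _ _)

lemma bound_le_half (hb : 0 ≤ b) : b / max 2 (2 * L / Lmin) ≤ b / 2 :=
  div_le_div_of_nonneg_left hb two_pos (le_max_left _ _)

lemma le_bound_of_mul_le {x y : ℝ} (hb : 0 < b) (hL : 0 ≤ L) (hbm : 0 ≤ bm)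
    (hxy : x * y ≤ 2 * L * bm) (hy : b < 2 * y) : x ≤ 2 * L * max 1 (bm / (1 / 2 * b)) :=
  calc x ≤ 2 * L * bm / y := by rw [le_div_iff₀ (by linarith)]; exact hxy
    _ ≤ 2 * L * bm / (1 / 2 * b) := by gcongr; linarith
    _ = 2 * L * (bm / (1 / 2 * b)) := by ring
    _ ≤ 2 * L * max 1 (bm / (1 / 2 * b)) := by gcongr; exact le_max_right _ _

lemma bound_le_of_le_mul {x y : ℝ} (hLmin : 0 < Lmin) (hb : 0 ≤ b) (hx : 0 < x)
    (hxL : x / 2 < L) (hxy : Lmin * b ≤ x * y) : b / max 2 (2 * L / Lmin) ≤ y := by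
  have hL : 0 < L := by linarith
  calc b / max 2 (2 * L / Lmin) ≤ b / (2 * L / Lmin) :=
        div_le_div_of_nonneg_left hb (by positivity) (le_max_right _ _)
    _ = Lmin * b / (2 * L) := by field_simp
    _ ≤ x * y / x := div_le_div₀ ((mul_nonneg hLmin.le hb).trans hxy) hxy hx (by linarith)
    _ = y := by field_simp

theorem AdaptiveInvariant.initial {x y : ℝ} (hLmin : 0 < Lmin) (hL : Lmin ≤ L) (hb : 0 < b)
    (hx : x ≤ L) (hby : b ≤ y) (hybm : y ≤ bm) : AdaptiveInvariant Lmin L b bm x y where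
  pos := hb.trans_le hby
  le_max := hybm
  mul_le := by nlinarith
  le_trial_mul := le_trial_mul_of_le hLmin.le hb.le (hby.trans hybm) hby
  le_bound := by linarith [two_mul_le_bound (L := L) (b := b) (bm := bm) (by linarith)]
  bound_le := (bound_le_half hb.le).trans (by linarith)

theorem AdaptiveInvariant.step {x y x' y' : ℝ} (hLmin : 0 < Lmin) (hL : Lmin ≤ L)
    (hb : 0 < b) (hbm : b ≤ bm) (hI : AdaptiveInvariant Lmin L b bm x y)
    (hstep : AdaptiveStep Lmin L b bm x y x' y') : AdaptiveInvariant Lmin L b bm x' y' := by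
  obtain ⟨m, hx', hy', hexit⟩ := hstep
  have hpow : (1 : ℝ) ≤ 2 ^ m := one_le_pow₀ one_le_two
  have htrial_pos : 0 < min (2 * y) bm := lt_min (by linarith [hI.pos]) (by linarith)
  have hx'_pos : 0 < x' := by rw [hx']; positivity
  have hy'_pos : 0 < y' := by rw [hy']; positivity
  have hmul : x' * y' = max (x / 2) Lmin * min (2 * y) bm := by
    rw [hx', hy']; field_simp
  have hmul_le : x' * y' ≤ 2 * L * bm := hmul ▸ trial_mul_le hLmin.le hL (by linarith) hI.mul_le
  have hle_mul : Lmin * b ≤ x' * y' := hmul ▸ hI.le_trial_mul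
  have h2L : 2 * L ≤ 2 * L * max 1 (bm / (1 / 2 * b)) := two_mul_le_bound (by linarith)
  have hhalf : b / max 2 (2 * L / Lmin) ≤ b / 2 := bound_le_half hb.le
  have hbounds : x' ≤ 2 * L * max 1 (bm / (1 / 2 * b)) ∧ b / max 2 (2 * L / Lmin) ≤ y' := by
    rcases hexit with rfl | hLexit | hβexit
    · simp only [pow_zero, one_mul, div_one] at hx' hy'
      subst hx' hy'
      refine ⟨max_le ?_ ?_, le_min ?_ ?_⟩
      · linarith [hI.le_bound]
      · linarith
      · linarith [hI.bound_le, hI.pos]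
      · linarith
    · exact ⟨by linarith, bound_le_of_le_mul hLmin hb.le hx'_pos hLexit hle_mul⟩
    · exact ⟨le_bound_of_mul_le hb (by linarith) (by linarith) hmul_le hβexit, by linarith⟩
  exact
    { pos := hy'_pos
      le_max := by
        rw [hy']; exact (div_le_self htrial_pos.le hpow).trans (min_le_right _ _)
      mul_le := hmul_le
      le_trial_mul := le_trial_mul_of_le_mul hLmin.le hb.le hbm hy'_pos.le hle_mul
      le_bound := hbounds.1
      bound_le := hbounds.2 }

end AdaptiveStep

theorem stmt15_general (L Lmin α αmin : ℝ)
    (hLmin : 0 < Lmin) (hL : Lmin ≤ L)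
    (hα1 : α < 1 / 2) (hαmin : αmin ≤ α)
    (Lk βk : ℕ → ℝ)
    (hL0 : Lk 0 ≤ L) (hβ0 : (1 / 2 - α) ≤ βk 0) (hβ0' : βk 0 ≤ 1 / 2 - αmin)
    (hstep : ∀ k, ∃ m : ℕ,
      Lk (k + 1) = 2 ^ m * max (Lk k / 2) Lmin ∧
      βk (k + 1) = min (2 * βk k) (1 / 2 - αmin) / 2 ^ m ∧
      (m = 0 ∨ Lk (k + 1) / 2 < L ∨ (1 / 2 - α) < 2 * βk (k + 1)))
    (N : ℕ) :
    ∀ k < N, Lk (k + 1) ≤ 2 * L * max 1 ((1 / 2 - αmin) / ((1 / 2) * (1 / 2 - α)))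
      ∧ (1 / 2 - α) / max 2 (2 * L / Lmin) ≤ βk (k + 1) := by
  have hb : 0 < 1 / 2 - α := by linarith
  have hbm : 1 / 2 - α ≤ 1 / 2 - αmin := by linarith
  have hI : ∀ n, AdaptiveInvariant Lmin L (1 / 2 - α) (1 / 2 - αmin) (Lk n) (βk n) := by
    intro n
    induction n with
    | zero => exact AdaptiveInvariant.initial hLmin hL hb hL0 hβ0 hβ0'
    | succ n ih => exact ih.step hLmin hL hb hbm (hstep n)
  exact fun k _ => ⟨(hI (k + 1)).le_bound, (hI (k + 1)).bound_le⟩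

/-- Bounds on the adaptive parameters of Algorithm 2: with L_0 ≤ L, β_0 ≥ β,
doubling of L (from max{L_k/2, L_min}) and halving of β (from min{2β_k, β_max})
terminating once L_{k+1} ≥ L and β_{k+1} ≤ β, one has
L_{k+1} ≤ 2L·max{1, β_max/(0.5β)} and β_{k+1} ≥ β / max{2, 2L/L_min}. -/
theorem stmt15 (L Lmin α αmin : ℝ)
    (hLmin : 0 < Lmin) (hL : Lmin ≤ L)
    (hα0 : 0 ≤ α) (hα1 : α < 1 / 2) (hαmin0 : 0 ≤ αmin) (hαmin : αmin ≤ α)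
    (Lk βk : ℕ → ℝ)
    (hL0 : Lk 0 ≤ L) (hβ0 : (1 / 2 - α) ≤ βk 0) (hβ0' : βk 0 ≤ 1 / 2 - αmin)
    (hstep : ∀ k, ∃ m : ℕ,
      Lk (k + 1) = 2 ^ m * max (Lk k / 2) Lmin ∧
      βk (k + 1) = min (2 * βk k) (1 / 2 - αmin) / 2 ^ m ∧
      (m = 0 ∨ Lk (k + 1) / 2 < L ∨ (1 / 2 - α) < 2 * βk (k + 1)))
    (N : ℕ) :
    ∀ k < N, Lk (k + 1) ≤ 2 * L * max 1 ((1 / 2 - αmin) / ((1 / 2) * (1 / 2 - α)))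
      ∧ (1 / 2 - α) / max 2 (2 * L / Lmin) ≤ βk (k + 1) :=
  stmt15_general L Lmin α αmin hLmin hL hα1 hαmin Lk βk hL0 hβ0 hβ0' hstep N
end

section
/- In the adaptive Algorithm 2, the total number of executions of the inner step (step 4) over N outer iterations is at most 2N + log₂(2·max{L/L_min, (0.5−α_min)/(0.5−α)}). -/
/-!
Each outer iteration multiplies `L_k` by at least `2^(m_k - 1) / 2` and divides `β_k` by at least
`2^(m_k - 1) / 2`, so `m_k ≤ 2 + Δ log₂ L_k` and `m_k ≤ 2 + Δ log₂ (1 / β_k)`; summing, either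
potential telescopes. Since the inner loop stops as soon as `L_{k+1} ≥ L` and `β_{k+1} ≤ 0.5 − α`,
every iterate satisfies `L_k ≤ 2L` or `β_k ≥ (0.5 − α)/2`, and whichever holds at `k = N` bounds the
corresponding potential by `log₂ (2 · max {L/L_min, (0.5−α_min)/(0.5−α)})`.
-/

open Real Finset

lemma natCast_le_two_add_logb_sub_logb {n : ℕ} {x y : ℝ} (hx : 0 < x)
    (h : 2 ^ (n - 1) * x ≤ 2 * y) : (n : ℝ) ≤ 2 + logb 2 y - logb 2 x := by
  have hy : 0 < y := by nlinarith [pow_pos (two_pos : (0 : ℝ) < 2) (n - 1)]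
  have hlog := logb_le_logb_of_le one_lt_two (by positivity) h
  rw [logb_mul (by positivity) hx.ne', logb_mul two_ne_zero hy.ne', logb_pow,
    logb_self_eq_one one_lt_two] at hlog
  have hn : (n : ℝ) ≤ ((n - 1 : ℕ) : ℝ) + 1 := by norm_cast; omega
  linarith

lemma sum_range_le_mul_add_sub {m f : ℕ → ℝ} {c : ℝ} (h : ∀ k, m k ≤ c + (f (k + 1) - f k))
    (N : ℕ) : ∑ k ∈ range N, m k ≤ c * N + (f N - f 0) := by
  calc ∑ k ∈ range N, m k ≤ ∑ k ∈ range N, (c + (f (k + 1) - f k)) := sum_le_sum fun k _ => h k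
    _ = c * N + (f N - f 0) := by
      rw [sum_add_distrib, sum_const, card_range, sum_range_sub, nsmul_eq_mul, mul_comm]

lemma logb_sub_logb_le_logb_of_div_le {x y B : ℝ} (hx : 0 < x) (hy : 0 < y) (h : y / x ≤ B) :
    logb 2 y - logb 2 x ≤ logb 2 B := by
  rw [← logb_div hy.ne' hx.ne']
  exact logb_le_logb_of_le one_lt_two (div_pos hy hx) h

section AdaptiveRun

variable {Lmin βmax L β : ℝ} {Lk βk : ℕ → ℝ} {m : ℕ → ℕ}

lemma le_Lk_of_update (hLmin : 0 ≤ Lmin) (hL0 : Lmin ≤ Lk 0)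
    (hL : ∀ k, Lk (k + 1) = 2 ^ (m k - 1) * max (Lk k / 2) Lmin) (k : ℕ) : Lmin ≤ Lk k := by
  cases k with
  | zero => exact hL0
  | succ k =>
    rw [hL k]
    exact (le_max_right _ _).trans
      (le_mul_of_one_le_left (hLmin.trans (le_max_right _ _)) (one_le_pow₀ one_le_two))

lemma βk_pos_of_update (hβ0 : 0 < βk 0) (hβmax : 0 < βmax)
    (hβ : ∀ k, βk (k + 1) = min (2 * βk k) βmax / 2 ^ (m k - 1)) (k : ℕ) : 0 < βk k := by
  induction k with
  | zero => exact hβ0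
  | succ k ih => rw [hβ k]; exact div_pos (lt_min (by linarith) hβmax) (by positivity)

lemma βk_le_of_update (hβ0 : 0 < βk 0) (hβ0' : βk 0 ≤ βmax)
    (hβ : ∀ k, βk (k + 1) = min (2 * βk k) βmax / 2 ^ (m k - 1)) (k : ℕ) : βk k ≤ βmax := by
  cases k with
  | zero => exact hβ0'
  | succ k =>
    have hβmax : 0 < βmax := hβ0.trans_le hβ0'
    have hpos := βk_pos_of_update hβ0 hβmax hβ k
    rw [hβ k]
    exact (div_le_self (lt_min (by linarith) hβmax).le (one_le_pow₀ one_le_two)).trans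
      (min_le_right _ _)

lemma Lk_le_or_le_βk (hLmin : 0 ≤ Lmin) (hLk : ∀ k, Lmin ≤ Lk k) (hβpos : ∀ k, 0 < βk k)
    (hβk : ∀ k, βk k ≤ βmax)
    (hL : ∀ k, Lk (k + 1) = 2 ^ (m k - 1) * max (Lk k / 2) Lmin)
    (hβ : ∀ k, βk (k + 1) = min (2 * βk k) βmax / 2 ^ (m k - 1))
    (hexit : ∀ k, m k = 1 ∨ Lk (k + 1) / 2 < L ∨ β < 2 * βk (k + 1))
    (h0 : Lk 0 ≤ 2 * L ∨ β / 2 ≤ βk 0) (k : ℕ) : Lk k ≤ 2 * L ∨ β / 2 ≤ βk k := by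
  induction k with
  | zero => exact h0
  | succ k ih =>
    rcases hexit k with hm | hLexit | hβexit
    · rw [hL k, hβ k, hm, Nat.sub_self, pow_zero, one_mul, div_one]
      rcases ih with hLle | hβle
      · exact .inl (max_le (by linarith [hLk k]) (by linarith [hLk k]))
      · exact .inr (le_min (by linarith [hβpos k]) (by linarith [hβk k]))
    · exact .inl (by linarith)
    · exact .inr (by linarith)

lemma natCast_le_two_add_logb_Lk (k : ℕ) (hpos : 0 < Lk k)
    (hL : Lk (k + 1) = 2 ^ (m k - 1) * max (Lk k / 2) Lmin) :
    (m k : ℝ) ≤ 2 + (logb 2 (Lk (k + 1)) - logb 2 (Lk k)) := by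
  rw [← add_sub_assoc]
  refine natCast_le_two_add_logb_sub_logb hpos ?_
  rw [hL, mul_left_comm]
  gcongr
  linarith [le_max_left (Lk k / 2) Lmin]

lemma natCast_le_two_add_logb_βk (k : ℕ) (hpos : 0 < βk (k + 1))
    (hβ : βk (k + 1) = min (2 * βk k) βmax / 2 ^ (m k - 1)) :
    (m k : ℝ) ≤ 2 + (logb 2 (βk k) - logb 2 (βk (k + 1))) := by
  rw [← add_sub_assoc]
  refine natCast_le_two_add_logb_sub_logb hpos ?_
  rw [hβ, mul_div_cancel₀ _ (by positivity)]
  exact min_le_left _ _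

end AdaptiveRun

theorem stmt18_general (L Lmin α αmin : ℝ)
    (hLmin : 0 < Lmin)
    (hα1 : α < 1 / 2)
    (Lk βk : ℕ → ℝ) (m : ℕ → ℕ)
    (hL0 : Lmin ≤ Lk 0)
    (hβ0 : (1 / 2 - α) ≤ βk 0) (hβ0' : βk 0 ≤ 1 / 2 - αmin)
    (hstep : ∀ k,
      Lk (k + 1) = 2 ^ (m k - 1) * max (Lk k / 2) Lmin ∧
      βk (k + 1) = min (2 * βk k) (1 / 2 - αmin) / 2 ^ (m k - 1) ∧
      (m k = 1 ∨ Lk (k + 1) / 2 < L ∨ (1 / 2 - α) < 2 * βk (k + 1)))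
    (N : ℕ) :
    (∑ k ∈ Finset.range N, (m k : ℝ))
      ≤ 2 * N + Real.logb 2 (2 * max (L / Lmin) ((1 / 2 - αmin) / (1 / 2 - α))) := by
  have hβ : 0 < 1 / 2 - α := by linarith
  have hβ0pos : 0 < βk 0 := hβ.trans_le hβ0
  have hLk := le_Lk_of_update hLmin.le hL0 fun k => (hstep k).1
  have hβpos := βk_pos_of_update hβ0pos (hβ0pos.trans_le hβ0') fun k => (hstep k).2.1
  have hβle := βk_le_of_update hβ0pos hβ0' fun k => (hstep k).2.1
  rcases Lk_le_or_le_βk hLmin.le hLk hβpos hβle (fun k => (hstep k).1) (fun k => (hstep k).2.1)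
    (fun k => (hstep k).2.2) (.inr (by linarith)) N with hLN | hβN
  · refine (sum_range_le_mul_add_sub (f := fun k => logb 2 (Lk k)) (fun k =>
      natCast_le_two_add_logb_Lk k (hLmin.trans_le (hLk k)) (hstep k).1) N).trans
      (add_le_add_right ?_ _)
    refine logb_sub_logb_le_logb_of_div_le (hLmin.trans_le hL0) (hLmin.trans_le (hLk N)) ?_
    calc Lk N / Lk 0 ≤ 2 * L / Lmin := div_le_div₀ (by linarith [hLk N]) hLN hLmin hL0
      _ ≤ _ := by rw [mul_div_assoc]; gcongr; exact le_max_left _ _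
  · refine (sum_range_le_mul_add_sub (f := fun k => -logb 2 (βk k)) (fun k =>
      (natCast_le_two_add_logb_βk k (hβpos (k + 1)) (hstep k).2.1).trans_eq (by ring)) N).trans
      (add_le_add_right ?_ _)
    rw [neg_sub_neg]
    refine logb_sub_logb_le_logb_of_div_le (hβpos N) hβ0pos ?_
    calc βk 0 / βk N ≤ (1 / 2 - αmin) / ((1 / 2 - α) / 2) :=
          div_le_div₀ (hβ0pos.trans_le hβ0').le hβ0' (by linarith) hβN
      _ ≤ _ := by rw [div_div_eq_mul_div, mul_comm, mul_div_assoc]; gcongr; exact le_max_right _ _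

/-- Bound on the total number of inner-step (step 4) executions of Algorithm 2:
at most 2N + log₂(2·max{L/L_min, (0.5−α_min)/(0.5−α)}). -/
theorem stmt18 (L Lmin α αmin : ℝ)
    (hLmin : 0 < Lmin) (hL : Lmin ≤ L)
    (hα0 : 0 ≤ α) (hα1 : α < 1 / 2) (hαmin0 : 0 ≤ αmin) (hαmin : αmin ≤ α)
    (Lk βk : ℕ → ℝ) (m : ℕ → ℕ)
    (hm : ∀ k, 1 ≤ m k)
    (hL0 : Lmin ≤ Lk 0) (hL0' : Lk 0 ≤ L)
    (hβ0 : (1 / 2 - α) ≤ βk 0) (hβ0' : βk 0 ≤ 1 / 2 - αmin)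
    (hstep : ∀ k,
      Lk (k + 1) = 2 ^ (m k - 1) * max (Lk k / 2) Lmin ∧
      βk (k + 1) = min (2 * βk k) (1 / 2 - αmin) / 2 ^ (m k - 1) ∧
      (m k = 1 ∨ Lk (k + 1) / 2 < L ∨ (1 / 2 - α) < 2 * βk (k + 1)))
    (N : ℕ) :
    (∑ k ∈ Finset.range N, (m k : ℝ))
      ≤ 2 * N + Real.logb 2 (2 * max (L / Lmin) ((1 / 2 - αmin) / (1 / 2 - α))) :=
  stmt18_general L Lmin α αmin hLmin hα1 Lk βk m hL0 hβ0 hβ0' hstep N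
end

section
/- If f is L-smooth and the step x⁺ = x − h∇̃f(x) is taken with any h > 0 and ‖∇̃f(x) − ∇f(x)‖ ≤ α‖∇f(x)‖, then after finitely many doublings of a trial constant L' (starting from any L' > 0), the condition f(x⁺) ≤ f(x) + ⟨∇̃f(x), x⁺−x⟩ + (L'/2)‖x⁺−x‖² + (α/(1−α))‖∇̃f(x)‖‖x⁺−x‖ is satisfied; in particular it holds for every L' ≥ L. -/
open scoped RealInnerProductSpace

/-!
An `L`-smooth function lies below its quadratic model at every point (the descent lemma).
Replacing the true gradient `∇f(x)` by `∇̃f(x)` in the linear term costs at most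
`‖∇f(x) - ∇̃f(x)‖ ‖x⁺ - x‖`, and a relative error `α` with respect to `∇f(x)` is a relative
error `α / (1 - α)` with respect to `∇̃f(x)`. So the exit inequality holds as soon as `L' ≥ L`,
which doubling reaches from any `L₀ > 0`.
-/

theorem norm_sub_le_div_one_sub_mul_norm {F : Type*} [SeminormedAddCommGroup F] {g g' : F}
    {α : ℝ} (hα0 : 0 ≤ α) (hα1 : α < 1) (herr : ‖g' - g‖ ≤ α * ‖g‖) :
    ‖g - g'‖ ≤ α / (1 - α) * ‖g'‖ := by
  have hg := mul_le_mul_of_nonneg_left (norm_le_norm_add_norm_sub' g g') hα0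
  rw [norm_sub_rev] at herr
  rw [div_mul_eq_mul_div, le_div_iff₀ (by linarith)]
  linarith

section InnerProductSpace

variable {E : Type*} [NormedAddCommGroup E] [InnerProductSpace ℝ E]

theorem inner_le_inner_add_of_norm_sub_le_mul {g g' d : E} {α : ℝ} (hα0 : 0 ≤ α) (hα1 : α < 1)
    (herr : ‖g' - g‖ ≤ α * ‖g‖) :
    ⟪g, d⟫ ≤ ⟪g', d⟫ + α / (1 - α) * ‖g'‖ * ‖d‖ := by
  calc ⟪g, d⟫ = ⟪g', d⟫ + ⟪g - g', d⟫ := by rw [inner_sub_left]; ring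
    _ ≤ ⟪g', d⟫ + ‖g - g'‖ * ‖d‖ := by gcongr; exact real_inner_le_norm _ _
    _ ≤ ⟪g', d⟫ + α / (1 - α) * ‖g'‖ * ‖d‖ := by
        gcongr; exact norm_sub_le_div_one_sub_mul_norm hα0 hα1 herr

theorem le_add_inner_gradient_add_half_mul_sq [CompleteSpace E] {f : E → ℝ}
    (hf : Differentiable ℝ f) {L : ℝ}
    (hsmooth : ∀ x y, ‖gradient f y - gradient f x‖ ≤ L * ‖y - x‖) (x y : E) :
    f y ≤ f x + ⟪gradient f x, y - x⟫ + (L / 2) * ‖y - x‖ ^ 2 := by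
  set d := y - x
  -- `φ 1 - φ 0` is the excess of `f y` over the quadratic model; smoothness makes `φ` antitone
  set φ : ℝ → ℝ := fun t => f (x + t • d) - t * ⟪gradient f x, d⟫ - L / 2 * t ^ 2 * ‖d‖ ^ 2
  have hφ' : ∀ t, HasDerivAt φ
      (⟪gradient f (x + t • d) - gradient f x, d⟫ - L * t * ‖d‖ ^ 2) t := by
    intro t
    have hline : HasDerivAt (fun s : ℝ => x + s • d) d t := by
      simpa using ((hasDerivAt_id t).smul_const d).const_add x
    have hfline := (hf (x + t • d)).hasGradientAt.hasFDerivAt.comp_hasDerivAt t hline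
    refine ((hfline.sub ((hasDerivAt_id t).mul_const ⟪gradient f x, d⟫)).sub
      (((hasDerivAt_pow 2 t).const_mul (L / 2)).mul_const (‖d‖ ^ 2))).congr_deriv ?_
    simp only [InnerProductSpace.toDual_apply_apply, inner_sub_left]
    ring
  have hφ'_nonpos : ∀ t ∈ interior (Set.Ici (0 : ℝ)),
      ⟪gradient f (x + t • d) - gradient f x, d⟫ - L * t * ‖d‖ ^ 2 ≤ 0 := by
    intro t ht
    rw [interior_Ici, Set.mem_Ioi] at ht
    rw [sub_nonpos]
    calc ⟪gradient f (x + t • d) - gradient f x, d⟫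
        ≤ ‖gradient f (x + t • d) - gradient f x‖ * ‖d‖ := real_inner_le_norm _ _
      _ ≤ L * ‖t • d‖ * ‖d‖ := by
          gcongr
          simpa using hsmooth x (x + t • d)
      _ = L * t * ‖d‖ ^ 2 := by rw [norm_smul, Real.norm_of_nonneg ht.le]; ring
  have hanti : AntitoneOn φ (Set.Ici 0) :=
    antitoneOn_of_hasDerivWithinAt_nonpos (convex_Ici 0)
      (fun t _ => (hφ' t).continuousAt.continuousWithinAt)
      (fun t _ => (hφ' t).hasDerivWithinAt) hφ'_nonpos
  have hφ10 := hanti (Set.mem_Ici.mpr le_rfl) (Set.mem_Ici.mpr zero_le_one) zero_le_one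
  simp only [φ, d, zero_smul, one_smul, add_zero, add_sub_cancel, zero_mul, one_mul, sub_zero,
    one_pow, ne_eq, OfNat.ofNat_ne_zero, not_false_eq_true, zero_pow] at hφ10
  linarith

end InnerProductSpace

theorem stmt19_general {n : ℕ} (f : EuclideanSpace ℝ (Fin n) → ℝ)
    (hf : Differentiable ℝ f)
    (L : ℝ)
    (hsmooth : ∀ x y, ‖gradient f y - gradient f x‖ ≤ L * ‖y - x‖)
    (α : ℝ) (hα0 : 0 ≤ α) (hα1 : α < 1)
    (x tg : EuclideanSpace ℝ (Fin n))
    (herr : ‖tg - gradient f x‖ ≤ α * ‖gradient f x‖)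
    (xplus : EuclideanSpace ℝ (Fin n)) :
    (∀ L' : ℝ, L ≤ L' →
      f xplus ≤ f x + ⟪tg, xplus - x⟫ + (L' / 2) * ‖xplus - x‖ ^ 2
        + (α / (1 - α)) * ‖tg‖ * ‖xplus - x‖) ∧
    (∀ L0 : ℝ, 0 < L0 → ∃ m : ℕ,
      f xplus ≤ f x + ⟪tg, xplus - x⟫ + (2 ^ m * L0 / 2) * ‖xplus - x‖ ^ 2
        + (α / (1 - α)) * ‖tg‖ * ‖xplus - x‖) := by
  have exit_of_le : ∀ L' : ℝ, L ≤ L' →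
      f xplus ≤ f x + ⟪tg, xplus - x⟫ + (L' / 2) * ‖xplus - x‖ ^ 2
        + (α / (1 - α)) * ‖tg‖ * ‖xplus - x‖ := by
    intro L' hL'
    have hdescent := le_add_inner_gradient_add_half_mul_sq hf hsmooth x xplus
    have hinner := inner_le_inner_add_of_norm_sub_le_mul (d := xplus - x) hα0 hα1 herr
    have hquad : L / 2 * ‖xplus - x‖ ^ 2 ≤ L' / 2 * ‖xplus - x‖ ^ 2 := by gcongr
    linarith
  refine ⟨exit_of_le, fun L0 hL0 => ?_⟩
  obtain ⟨m, hm⟩ := pow_unbounded_of_one_lt (L / L0) one_lt_two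
  exact ⟨m, exit_of_le _ ((div_lt_iff₀ hL0).mp hm).le⟩

/-- Termination of the adaptive line search: the exit inequality holds for any
trial constant L' ≥ L; hence starting from any L₀ > 0 it holds after finitely
many doublings. -/
theorem stmt19 {n : ℕ} (f : EuclideanSpace ℝ (Fin n) → ℝ)
    (hf : Differentiable ℝ f)
    (L : ℝ) (hL : 0 < L)
    (hsmooth : ∀ x y, ‖gradient f y - gradient f x‖ ≤ L * ‖y - x‖)
    (α : ℝ) (hα0 : 0 ≤ α) (hα1 : α < 1)
    (x tg : EuclideanSpace ℝ (Fin n))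
    (herr : ‖tg - gradient f x‖ ≤ α * ‖gradient f x‖)
    (h : ℝ) (hh : 0 < h)
    (xplus : EuclideanSpace ℝ (Fin n)) (hx : xplus = x - h • tg) :
    (∀ L' : ℝ, L ≤ L' →
      f xplus ≤ f x + ⟪tg, xplus - x⟫ + (L' / 2) * ‖xplus - x‖ ^ 2
        + (α / (1 - α)) * ‖tg‖ * ‖xplus - x‖) ∧
    (∀ L0 : ℝ, 0 < L0 → ∃ m : ℕ,
      f xplus ≤ f x + ⟪tg, xplus - x⟫ + (2 ^ m * L0 / 2) * ‖xplus - x‖ ^ 2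
        + (α / (1 - α)) * ‖tg‖ * ‖xplus - x‖) :=
  stmt19_general f hf L hsmooth α hα0 hα1 x tg herr xplus
end
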